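/- Let d ≥ 2, ν > 0, let u_1,…,u_d be positive reals, let J ⊆ {1,…,d} have p elements, and let f : ℝ^d → ℝ be defined by f(x) = Π_{j∈J} 1{x_j > 0}. Let S be the LIME random subset of {1,…,d}, Σ = E[π ζ ζᵀ], Γ^f = E[π f(φ_S) ζ], and β^f = Σ⁻¹ Γ^f ∈ ℝ^{d+1}. Then β^f_0 = c_d⁻¹ (σ_0 α_p + p σ_1 α_p + (d−p) σ_1 α_{p+1}); for every j ∈ J, β^f_j = c_d⁻¹ (σ_1 α_p + σ_2 α_p + (d−p) σ_3 α_{p+1} + (p−1) σ_3 α_p); and for every j ∈ {1,…,d} \ J, β^f_j = c_d⁻¹ (σ_1 α_p + σ_2 α_{p+1} + (d−p−1) σ_3 α_{p+1} + p σ_3 α_p). -/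

import Mathlib

noncomputable section

/-- The LIME weight function ψ_ν(t) = exp(−(1−√(1−t))²/(2ν²)). -/
def psi (ν t : ℝ) : ℝ := Real.exp (-(1 - Real.sqrt (1 - t)) ^ 2 / (2 * ν ^ 2))

/-- Expectation of `g S` where `S` is the LIME random subset of `{1,…,d}`:
first draw `s` uniformly in `{1,…,d}`, then `S` uniformly among subsets of cardinality `s`. -/
def limeExp (d : ℕ) (g : Finset (Fin d) → ℝ) : ℝ :=
  (1 / (d : ℝ)) * ∑ s ∈ Finset.Icc 1 d, ((d.choose s : ℝ))⁻¹ *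
    ∑ S ∈ Finset.univ.filter (fun S : Finset (Fin d) => S.card = s), g S

/-- The coefficient α_p(d,ν). -/
def alpha (d : ℕ) (ν : ℝ) (p : ℕ) : ℝ :=
  (1 / (d : ℝ)) * ∑ s ∈ Finset.Icc 1 d,
    (∏ k ∈ Finset.range p, (((d : ℝ) - (s : ℝ) - (k : ℝ)) / ((d : ℝ) - (k : ℝ)))) *
      psi ν ((s : ℝ) / (d : ℝ))

/-- The normalization constant c_d = (d−1)α₀α₂ − dα₁² + α₀α₁. -/
def cConst (d : ℕ) (ν : ℝ) : ℝ :=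
  ((d : ℝ) - 1) * alpha d ν 0 * alpha d ν 2 - (d : ℝ) * (alpha d ν 1) ^ 2
    + alpha d ν 0 * alpha d ν 1

/-- σ₀ = (d−1)α₂ + α₁. -/
def sigma0 (d : ℕ) (ν : ℝ) : ℝ := ((d : ℝ) - 1) * alpha d ν 2 + alpha d ν 1

/-- σ₁ = −α₁. -/
def sigma1 (d : ℕ) (ν : ℝ) : ℝ := -(alpha d ν 1)

/-- σ₂ = ((d−2)α₀α₂ − (d−1)α₁² + α₀α₁)/(α₁−α₂). -/
def sigma2 (d : ℕ) (ν : ℝ) : ℝ :=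
  (((d : ℝ) - 2) * alpha d ν 0 * alpha d ν 2 - ((d : ℝ) - 1) * (alpha d ν 1) ^ 2
      + alpha d ν 0 * alpha d ν 1) / (alpha d ν 1 - alpha d ν 2)

/-- σ₃ = (α₁² − α₀α₂)/(α₁−α₂). -/
def sigma3 (d : ℕ) (ν : ℝ) : ℝ :=
  ((alpha d ν 1) ^ 2 - alpha d ν 0 * alpha d ν 2) / (alpha d ν 1 - alpha d ν 2)

/-- Normalized TF-IDF of the perturbed document obtained by deleting the words
indexed by `S`: `(φ_S)_j = 1{j ∉ S} · u_j / √(∑_{k ∉ S} u_k²)`, and `φ_S = 0`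
when all words are deleted. -/
def phiS {d : ℕ} (u : Fin d → ℝ) (S : Finset (Fin d)) : Fin d → ℝ :=
  if S = Finset.univ then 0 else
    fun j => (if j ∉ S then (1 : ℝ) else 0) * u j / Real.sqrt (∑ k ∈ Sᶜ, (u k) ^ 2)

/-- The vector of interpretable features with a leading 1 for the intercept:
ζ(S) = (1, z₁, …, z_d) with z_j = 1{j ∉ S}. -/
def zeta (d : ℕ) (S : Finset (Fin d)) : Fin (d + 1) → ℝ :=
  Fin.cons 1 (fun j : Fin d => if j ∉ S then (1 : ℝ) else 0)

/-- Σ = E[π ζ ζᵀ] ∈ ℝ^{(d+1)×(d+1)}. -/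
def SigmaE (d : ℕ) (ν : ℝ) : Matrix (Fin (d + 1)) (Fin (d + 1)) ℝ :=
  Matrix.of fun a b =>
    limeExp d (fun S => psi ν ((S.card : ℝ) / (d : ℝ)) * zeta d S a * zeta d S b)

/-- β^f = Σ⁻¹ Γ^f, where Γ^f = E[π f(φ_S) ζ] and `g S` stands for `f (φ_S)`. -/
def betaF (d : ℕ) (ν : ℝ) (g : Finset (Fin d) → ℝ) : Fin (d + 1) → ℝ :=
  (SigmaE d ν)⁻¹.mulVec
    (fun a => limeExp d (fun S => psi ν ((S.card : ℝ) / (d : ℝ)) * g S * zeta d S a))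

/-!
With `w_s = ψ_ν(s/d)/d`, one has `E[π · 1{S ∩ T = ∅}] = Σ_s w_s C(d - |T|, s) / C(d, s) = α_{|T|}`.
Writing `ζ_a = 1{S ∩ F_a = ∅}` with `F_0 = ∅` and `F_{j+1} = {j}`, every entry of `Σ` is such an
expectation: `Σ` has `α₀` in the corner, `α₁` on the border and the diagonal and `α₂` elsewhere.
For positive `u`, `f(φ_S) = 1{S ∩ J = ∅}`, so likewise `Γ^f_a = α_{|J ∪ F_a|}`.

Matrices of this bordered shape are closed under multiplication, and `c_d⁻¹` times the bordered
matrix of the `σ`'s is a right inverse of `Σ` once `c_d ≠ 0` and `α₁ ≠ α₂`. Both hold for `d ≥ 2`: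
with `x_s = (d - s)/d`, `(d - 1)(α₁ - α₂) = d Σ_s w_s x_s (1 - x_s) > 0`, and
`c_d = d (Σ w_s · Σ w_s x_s² - (Σ w_s x_s)²) > 0` by the strict Cauchy–Schwarz inequality.
-/

open Finset
open scoped Matrix

lemma cast_choose_mul_succ {R : Type*} [CommRing R] (n k : ℕ) :
    (n.choose k : R) * (n + 1) = ((n + 1).choose k : R) * ((n : R) + 1 - k) := by
  rcases le_or_gt k (n + 1) with hk | hk
  · have h := congrArg (Nat.cast : ℕ → R) (Nat.choose_mul_succ_eq n k)
    push_cast [Nat.cast_sub hk] at h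
    exact h
  · simp [Nat.choose_eq_zero_of_lt hk, Nat.choose_eq_zero_of_lt (by omega : n < k)]

lemma cast_choose_sub_div_choose {d s : ℕ} (hs : s ≤ d) :
    ∀ p ≤ d, ((d - p).choose s : ℝ) / d.choose s
      = ∏ k ∈ range p, ((d : ℝ) - s - k) / ((d : ℝ) - k)
  | 0, _ => by
    have : (d.choose s : ℝ) ≠ 0 := by exact_mod_cast (Nat.choose_pos hs).ne'
    simp [this]
  | p + 1, hp => by
    obtain ⟨n, hn⟩ : ∃ n, d - p = n + 1 := ⟨d - p - 1, by omega⟩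
    have hdp : (d : ℝ) - p = n + 1 := by
      rw [← Nat.cast_sub (by omega : p ≤ d), hn]; push_cast; ring
    have hchoose : (d.choose s : ℝ) ≠ 0 := by exact_mod_cast (Nat.choose_pos hs).ne'
    rw [prod_range_succ, ← cast_choose_sub_div_choose hs p (by omega),
      show d - (p + 1) = n by omega, hn, show (d : ℝ) - s - p = n + 1 - s by linarith, hdp]
    have h := cast_choose_mul_succ (R := ℝ) n s
    field_simp
    linear_combination h

lemma sum_ite_disjoint_of_card_eq {α : Type*} [Fintype α] [DecidableEq α] (T : Finset α) (s : ℕ) :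
    ∑ S ∈ univ.filter (fun S : Finset α => #S = s), (if Disjoint S T then (1 : ℝ) else 0)
      = ((Fintype.card α - #T).choose s : ℝ) := by
  have h : (univ.filter fun S : Finset α => #S = s ∧ Disjoint S T) = powersetCard s Tᶜ := by
    ext S
    simp [mem_powersetCard, subset_compl_iff_disjoint_right, and_comm]
  rw [sum_boole, filter_filter, h, card_powersetCard, card_compl]

lemma sum_ite_mem_const {α R : Type*} [Fintype α] [DecidableEq α] [CommRing R] (J : Finset α)
    (x y : R) : ∑ j : α, (if j ∈ J then x else y) = #J * x + ((Fintype.card α : R) - #J) * y := by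
  rw [sum_ite, sum_const, sum_const, filter_mem_eq_inter, univ_inter, filter_not,
    filter_mem_eq_inter, univ_inter, ← compl_eq_univ_sdiff, card_compl, nsmul_eq_mul, nsmul_eq_mul,
    Nat.cast_sub (card_le_univ J)]

lemma sum_sum_mul_mul_sub_sq {ι R : Type*} [CommRing R] (s : Finset ι) (w x : ι → R) :
    ∑ i ∈ s, ∑ j ∈ s, w i * w j * (x i - x j) ^ 2
      = 2 * ((∑ i ∈ s, w i) * ∑ i ∈ s, w i * x i ^ 2 - (∑ i ∈ s, w i * x i) ^ 2) := by
  have h : ∀ i j, w i * w j * (x i - x j) ^ 2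
      = w j * (w i * x i ^ 2) + w i * (w j * x j ^ 2) - 2 * ((w i * x i) * (w j * x j)) := by
    intro i j; ring
  simp only [h, sum_sub_distrib, sum_add_distrib, ← mul_sum, ← sum_mul]
  ring

lemma sq_sum_mul_lt_sum_mul_sum_mul_sq {ι : Type*} {s : Finset ι} {w x : ι → ℝ}
    (hw : ∀ i ∈ s, 0 < w i) {i j : ι} (hi : i ∈ s) (hj : j ∈ s) (hij : x i ≠ x j) :
    (∑ i ∈ s, w i * x i) ^ 2 < (∑ i ∈ s, w i) * ∑ i ∈ s, w i * x i ^ 2 := by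
  have hterm : ∀ k ∈ s, ∀ l ∈ s, 0 ≤ w k * w l * (x k - x l) ^ 2 := fun k hk l hl => by
    have := hw k hk; have := hw l hl; positivity
  have hij_term : 0 < w i * w j * (x i - x j) ^ 2 := by
    have := hw i hi; have := hw j hj
    have := sub_ne_zero.mpr hij
    positivity
  have hpos : 0 < ∑ k ∈ s, ∑ l ∈ s, w k * w l * (x k - x l) ^ 2 :=
    sum_pos' (fun k hk => sum_nonneg (hterm k hk))
      ⟨i, hi, sum_pos' (hterm i hi) ⟨j, hj, hij_term⟩⟩
  linarith [sum_sum_mul_mul_sub_sq s w x]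

section BorderedMatrix

variable {R : Type*} {n : ℕ}

def borderedMatrix (a b b' c e : R) : Matrix (Fin (n + 1)) (Fin (n + 1)) R :=
  Matrix.of fun i j =>
    Fin.cases (Fin.cases a (fun _ => b) j)
      (fun i => Fin.cases b' (fun j => if i = j then c else e) j) i

variable (a b b' c e : R)

@[simp] lemma borderedMatrix_zero_zero : borderedMatrix (n := n) a b b' c e 0 0 = a := rfl

@[simp] lemma borderedMatrix_zero_succ (j : Fin n) : borderedMatrix a b b' c e 0 j.succ = b := rfl

@[simp] lemma borderedMatrix_succ_zero (i : Fin n) : borderedMatrix a b b' c e i.succ 0 = b' := rfl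

@[simp] lemma borderedMatrix_succ_succ (i j : Fin n) :
    borderedMatrix a b b' c e i.succ j.succ = if i = j then c else e := rfl

variable [CommRing R]

lemma sum_ite_eq_const (k : Fin n) (x y : R) :
    ∑ j : Fin n, (if j = k then x else y) = x + ((n : R) - 1) * y := by
  have h : ∀ j : Fin n, (if j = k then x else y) = (if j = k then x - y else 0) + y := fun j => by
    split_ifs <;> ring
  simp only [h, sum_add_distrib, Fintype.sum_ite_eq', sum_const, card_univ, Fintype.card_fin,
    nsmul_eq_mul]
  ring

lemma borderedMatrix_mulVec_zero (v : Fin (n + 1) → R) :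
    (borderedMatrix a b b' c e *ᵥ v) 0 = a * v 0 + b * ∑ j : Fin n, v j.succ := by
  simp [Matrix.mulVec, dotProduct, Fin.sum_univ_succ, mul_sum]

lemma borderedMatrix_mulVec_succ (v : Fin (n + 1) → R) (i : Fin n) :
    (borderedMatrix a b b' c e *ᵥ v) i.succ
      = b' * v 0 + (c - e) * v i.succ + e * ∑ j : Fin n, v j.succ := by
  have h : ∀ j : Fin n, (if i = j then c else e) * v j.succ
      = (if i = j then (c - e) * v j.succ else 0) + e * v j.succ := fun j => by
    split_ifs <;> ring
  simp only [Matrix.mulVec, dotProduct, Fin.sum_univ_succ, borderedMatrix_succ_zero,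
    borderedMatrix_succ_succ, h, sum_add_distrib, Fintype.sum_ite_eq, mul_sum]
  ring

lemma borderedMatrix_mul (A B B' C E : R) :
    borderedMatrix (n := n) a b b' c e * borderedMatrix A B B' C E
      = borderedMatrix (a * A + n * b * B') (a * B + b * (C + (n - 1) * E))
          (b' * A + (c - e) * B' + n * e * B') (b' * B + (c - e) * C + e * (C + (n - 1) * E))
          (b' * B + (c - e) * E + e * (C + (n - 1) * E)) := by
  ext i k
  change (borderedMatrix a b b' c e *ᵥ fun j => borderedMatrix A B B' C E j k) i = _
  cases i using Fin.cases <;> cases k using Fin.cases <;>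
    simp only [borderedMatrix_mulVec_zero, borderedMatrix_mulVec_succ, borderedMatrix_zero_zero,
      borderedMatrix_zero_succ, borderedMatrix_succ_zero, borderedMatrix_succ_succ,
      sum_ite_eq_const, sum_const, card_univ, Fintype.card_fin, nsmul_eq_mul]
  all_goals (try split_ifs) <;> ring

lemma smul_borderedMatrix (r : R) :
    r • borderedMatrix (n := n) a b b' c e
      = borderedMatrix (r * a) (r * b) (r * b') (r * c) (r * e) := by
  ext i j
  cases i using Fin.cases <;> cases j using Fin.cases <;> simp [mul_ite]

lemma borderedMatrix_one : borderedMatrix (n := n) (1 : R) 0 0 1 0 = 1 := by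
  ext i j
  cases i using Fin.cases <;> cases j using Fin.cases <;>
    simp [Matrix.one_apply, Fin.succ_inj, (Fin.succ_ne_zero _).symm]

end BorderedMatrix

lemma limeExp_psi_mul_ite_disjoint (d : ℕ) (ν : ℝ) (T : Finset (Fin d)) :
    limeExp d (fun S => psi ν (#S / d) * if Disjoint S T then 1 else 0) = alpha d ν #T := by
  unfold limeExp alpha
  congr 1
  refine sum_congr rfl fun s hs => ?_
  have hsd := (mem_Icc.mp hs).2
  have hcard : ∀ S ∈ univ.filter (fun S : Finset (Fin d) => #S = s),
      psi ν (#S / d) * (if Disjoint S T then 1 else 0)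
        = psi ν (s / d) * if Disjoint S T then 1 else 0 := fun S hS => by
    rw [(mem_filter.mp hS).2]
  rw [sum_congr rfl hcard, ← mul_sum,
    sum_ite_disjoint_of_card_eq, Fintype.card_fin,
    ← cast_choose_sub_div_choose hsd _ (by simpa using card_le_univ T)]
  ring

lemma limeExp_psi_mul_ite_disjoint_mul_ite_disjoint (d : ℕ) (ν : ℝ) (A B : Finset (Fin d)) :
    limeExp d (fun S => psi ν (#S / d) * (if Disjoint S A then 1 else 0)
      * (if Disjoint S B then 1 else 0)) = alpha d ν #(A ∪ B) := by
  simp only [mul_assoc, ite_zero_mul_ite_zero, one_mul, ← disjoint_union_right]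
  exact limeExp_psi_mul_ite_disjoint d ν (A ∪ B)

def featureSet (d : ℕ) : Fin (d + 1) → Finset (Fin d) := Fin.cons ∅ fun j => {j}

@[simp] lemma featureSet_zero (d : ℕ) : featureSet d 0 = ∅ := rfl

@[simp] lemma featureSet_succ {d : ℕ} (j : Fin d) : featureSet d j.succ = {j} := rfl

lemma zeta_eq_ite_disjoint (d : ℕ) (S : Finset (Fin d)) (a : Fin (d + 1)) :
    zeta d S a = if Disjoint S (featureSet d a) then 1 else 0 := by
  cases a using Fin.cases <;> simp [zeta, featureSet]

lemma SigmaE_apply (d : ℕ) (ν : ℝ) (a b : Fin (d + 1)) :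
    SigmaE d ν a b = alpha d ν #(featureSet d a ∪ featureSet d b) := by
  simp only [SigmaE, Matrix.of_apply, zeta_eq_ite_disjoint]
  exact limeExp_psi_mul_ite_disjoint_mul_ite_disjoint d ν _ _

lemma SigmaE_eq_borderedMatrix (d : ℕ) (ν : ℝ) :
    SigmaE d ν = borderedMatrix (alpha d ν 0) (alpha d ν 1) (alpha d ν 1) (alpha d ν 1)
      (alpha d ν 2) := by
  ext a b
  rw [SigmaE_apply]
  cases a using Fin.cases <;> cases b using Fin.cases <;>
    simp only [featureSet_zero, featureSet_succ, union_idempotent, empty_union, union_empty,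
      singleton_union, card_empty, card_singleton, borderedMatrix_zero_zero,
      borderedMatrix_zero_succ, borderedMatrix_succ_zero, borderedMatrix_succ_succ]
  case succ.succ j k =>
    split_ifs with h
    · rw [h, insert_eq_of_mem (mem_singleton_self k), card_singleton]
    · rw [card_pair h]

def limeWeight (d : ℕ) (ν : ℝ) (s : ℕ) : ℝ := psi ν (s / d) / d

def keepFraction (d s : ℕ) : ℝ := ((d : ℝ) - s) / d

lemma alpha_zero_eq (d : ℕ) (ν : ℝ) : alpha d ν 0 = ∑ s ∈ Icc 1 d, limeWeight d ν s := by
  simp [alpha, limeWeight, mul_sum, div_eq_inv_mul]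

lemma alpha_one_eq (d : ℕ) (ν : ℝ) :
    alpha d ν 1 = ∑ s ∈ Icc 1 d, limeWeight d ν s * keepFraction d s := by
  simp only [alpha, limeWeight, keepFraction, prod_range_one, mul_sum]
  refine sum_congr rfl fun s _ => ?_
  simp only [CharP.cast_eq_zero, sub_zero]
  ring

lemma sub_one_mul_alpha_two {d : ℕ} (hd : 2 ≤ d) (ν : ℝ) :
    ((d : ℝ) - 1) * alpha d ν 2
      = d * ∑ s ∈ Icc 1 d, limeWeight d ν s * keepFraction d s ^ 2 - alpha d ν 1 := by
  have hd0 : (d : ℝ) ≠ 0 := by positivity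
  have hd1 : (d : ℝ) - 1 ≠ 0 := by
    have : (2 : ℝ) ≤ d := by exact_mod_cast hd
    linarith
  simp only [alpha, limeWeight, keepFraction, prod_range_succ, prod_range_zero,
    mul_sum, ← sum_sub_distrib]
  refine sum_congr rfl fun s _ => ?_
  push_cast
  field_simp
  ring

lemma limeWeight_pos {d : ℕ} (hd : 0 < d) (ν : ℝ) (s : ℕ) : 0 < limeWeight d ν s :=
  div_pos (Real.exp_pos _) (by exact_mod_cast hd)

lemma sub_one_mul_alpha_one_sub_alpha_two {d : ℕ} (hd : 2 ≤ d) (ν : ℝ) :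
    ((d : ℝ) - 1) * (alpha d ν 1 - alpha d ν 2)
      = d * ∑ s ∈ Icc 1 d, limeWeight d ν s * (keepFraction d s * (1 - keepFraction d s)) := by
  have hsplit : ∑ s ∈ Icc 1 d, limeWeight d ν s * (keepFraction d s * (1 - keepFraction d s))
      = alpha d ν 1 - ∑ s ∈ Icc 1 d, limeWeight d ν s * keepFraction d s ^ 2 := by
    rw [alpha_one_eq, ← sum_sub_distrib]
    exact sum_congr rfl fun s _ => by ring
  rw [hsplit]
  linear_combination -sub_one_mul_alpha_two hd ν

lemma alpha_one_sub_alpha_two_pos {d : ℕ} (hd : 2 ≤ d) (ν : ℝ) :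
    0 < alpha d ν 1 - alpha d ν 2 := by
  have hd' : (2 : ℝ) ≤ d := by exact_mod_cast hd
  have hx : ∀ s : ℕ, keepFraction d s * (1 - keepFraction d s) = ((d : ℝ) - s) * s / d ^ 2 :=
    fun s => by unfold keepFraction; field_simp; ring
  have hterm : ∀ s ∈ Icc 1 d,
      0 ≤ limeWeight d ν s * (keepFraction d s * (1 - keepFraction d s)) := fun s hs => by
    have : (s : ℝ) ≤ d := by exact_mod_cast (mem_Icc.mp hs).2
    have : 0 ≤ (d : ℝ) - s := by linarith
    have := limeWeight_pos (by omega : 0 < d) ν s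
    rw [hx]
    positivity
  have hone : 0 < limeWeight d ν 1 * (keepFraction d 1 * (1 - keepFraction d 1)) := by
    have : 0 < (d : ℝ) - 1 := by linarith
    have := limeWeight_pos (by omega : 0 < d) ν 1
    rw [hx, Nat.cast_one]
    positivity
  have hsum := sum_pos' hterm ⟨1, mem_Icc.mpr ⟨le_rfl, by omega⟩, hone⟩
  have hprod : 0 < ((d : ℝ) - 1) * (alpha d ν 1 - alpha d ν 2) := by
    rw [sub_one_mul_alpha_one_sub_alpha_two hd]
    exact mul_pos (by linarith) hsum
  exact pos_of_mul_pos_right hprod (by linarith)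

lemma cConst_eq {d : ℕ} (hd : 2 ≤ d) (ν : ℝ) :
    cConst d ν = d * (alpha d ν 0 * ∑ s ∈ Icc 1 d, limeWeight d ν s * keepFraction d s ^ 2
      - alpha d ν 1 ^ 2) := by
  rw [cConst]
  linear_combination alpha d ν 0 * sub_one_mul_alpha_two hd ν

lemma cConst_pos {d : ℕ} (hd : 2 ≤ d) (ν : ℝ) : 0 < cConst d ν := by
  have hx : keepFraction d 1 ≠ keepFraction d 2 := by
    have : (d : ℝ) ≠ 0 := by positivity
    unfold keepFraction
    intro h
    field_simp at h
    norm_num at h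
  have hvar := sq_sum_mul_lt_sum_mul_sum_mul_sq (fun s _ => limeWeight_pos (by omega : 0 < d) ν s)
    (mem_Icc.mpr ⟨le_rfl, by omega⟩) (mem_Icc.mpr ⟨by omega, hd⟩) hx
  rw [cConst_eq hd, alpha_zero_eq, alpha_one_eq]
  exact mul_pos (by positivity) (sub_pos.mpr hvar)

lemma inv_SigmaE {d : ℕ} (hd : 2 ≤ d) (ν : ℝ) :
    (SigmaE d ν)⁻¹ = (cConst d ν)⁻¹ •
      borderedMatrix (sigma0 d ν) (sigma1 d ν) (sigma1 d ν) (sigma2 d ν) (sigma3 d ν) := by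
  refine Matrix.inv_eq_right_inv ?_
  have hc := (cConst_pos hd ν).ne'
  have h12 := (alpha_one_sub_alpha_two_pos hd ν).ne'
  rw [Matrix.mul_smul, SigmaE_eq_borderedMatrix, borderedMatrix_mul, smul_borderedMatrix,
    ← borderedMatrix_one]
  congr 1 <;> simp only [sigma0, sigma1, sigma2, sigma3] <;> field_simp <;> rw [cConst] <;> ring

lemma phiS_pos_iff {d : ℕ} {u : Fin d → ℝ} (hu : ∀ k, 0 < u k) (S : Finset (Fin d)) (j : Fin d) :
    0 < phiS u S j ↔ j ∉ S := by
  unfold phiS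
  split_ifs with hS
  · simp [hS]
  · have hne : Sᶜ.Nonempty := by rwa [nonempty_iff_ne_empty, Ne, compl_eq_empty_iff]
    have hnorm : 0 < Real.sqrt (∑ k ∈ Sᶜ, u k ^ 2) :=
      Real.sqrt_pos.mpr (sum_pos (fun k _ => pow_pos (hu k) 2) hne)
    by_cases hj : j ∈ S
    · simp [hj]
    · simpa [hj] using div_pos (hu j) hnorm

lemma prod_ite_pos_phiS {d : ℕ} {u : Fin d → ℝ} (hu : ∀ k, 0 < u k) (J S : Finset (Fin d)) :
    ∏ j ∈ J, (if 0 < phiS u S j then (1 : ℝ) else 0) = if Disjoint S J then 1 else 0 := by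
  simp only [phiS_pos_iff hu, prod_boole, disjoint_right]
  congr

lemma betaF_ite_disjoint {d : ℕ} (hd : 2 ≤ d) (ν : ℝ) (J : Finset (Fin d)) :
    betaF d ν (fun S => if Disjoint S J then 1 else 0)
      = (cConst d ν)⁻¹ •
        (borderedMatrix (sigma0 d ν) (sigma1 d ν) (sigma1 d ν) (sigma2 d ν) (sigma3 d ν)
          *ᵥ fun a => alpha d ν #(J ∪ featureSet d a)) := by
  rw [betaF, inv_SigmaE hd, Matrix.smul_mulVec]
  congr 2
  ext a
  simp only [zeta_eq_ite_disjoint]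
  exact limeExp_psi_mul_ite_disjoint_mul_ite_disjoint d ν _ _

theorem betaF_indicator_product_general (d : ℕ) (hd : 2 ≤ d) (ν : ℝ)
    (u : Fin d → ℝ) (hu : ∀ k, 0 < u k) (J : Finset (Fin d)) :
    betaF d ν (fun S => ∏ j ∈ J, (if 0 < phiS u S j then (1 : ℝ) else 0)) 0
        = (cConst d ν)⁻¹ *
          (sigma0 d ν * alpha d ν J.card + (J.card : ℝ) * sigma1 d ν * alpha d ν J.card
            + ((d : ℝ) - (J.card : ℝ)) * sigma1 d ν * alpha d ν (J.card + 1))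
      ∧ (∀ j ∈ J,
        betaF d ν (fun S => ∏ j ∈ J, (if 0 < phiS u S j then (1 : ℝ) else 0)) j.succ
          = (cConst d ν)⁻¹ *
            (sigma1 d ν * alpha d ν J.card + sigma2 d ν * alpha d ν J.card
              + ((d : ℝ) - (J.card : ℝ)) * sigma3 d ν * alpha d ν (J.card + 1)
              + ((J.card : ℝ) - 1) * sigma3 d ν * alpha d ν J.card))
      ∧ (∀ j : Fin d, j ∉ J →
        betaF d ν (fun S => ∏ j ∈ J, (if 0 < phiS u S j then (1 : ℝ) else 0)) j.succ
          = (cConst d ν)⁻¹ *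
            (sigma1 d ν * alpha d ν J.card + sigma2 d ν * alpha d ν (J.card + 1)
              + ((d : ℝ) - (J.card : ℝ) - 1) * sigma3 d ν * alpha d ν (J.card + 1)
              + (J.card : ℝ) * sigma3 d ν * alpha d ν J.card)) := by
  have hΓ : ∀ j : Fin d, alpha d ν #(J ∪ featureSet d j.succ)
      = if j ∈ J then alpha d ν #J else alpha d ν (#J + 1) := fun j => by
    rw [featureSet_succ, union_singleton, card_insert_eq_ite, apply_ite (alpha d ν)]
  have hsum : ∑ j : Fin d, alpha d ν #(J ∪ featureSet d j.succ)
      = #J * alpha d ν #J + ((d : ℝ) - #J) * alpha d ν (#J + 1) := by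
    simp only [hΓ, sum_ite_mem_const, Fintype.card_fin]
  simp only [prod_ite_pos_phiS hu, betaF_ite_disjoint hd, Pi.smul_apply, smul_eq_mul,
    borderedMatrix_mulVec_zero, borderedMatrix_mulVec_succ, featureSet_zero, union_empty, hsum]
  refine ⟨by ring, fun j hj => ?_, fun j hj => ?_⟩
  · rw [hΓ, if_pos hj]; ring
  · rw [hΓ, if_neg hj]; ring

/-- expression of β^f for a product of indicator functions
f(x) = ∏_{j∈J} 1{x_j > 0}, with p = |J|. -/
theorem betaF_indicator_product (d : ℕ) (hd : 2 ≤ d) (ν : ℝ) (hν : 0 < ν)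
    (u : Fin d → ℝ) (hu : ∀ k, 0 < u k) (J : Finset (Fin d)) :
    betaF d ν (fun S => ∏ j ∈ J, (if 0 < phiS u S j then (1 : ℝ) else 0)) 0
        = (cConst d ν)⁻¹ *
          (sigma0 d ν * alpha d ν J.card + (J.card : ℝ) * sigma1 d ν * alpha d ν J.card
            + ((d : ℝ) - (J.card : ℝ)) * sigma1 d ν * alpha d ν (J.card + 1))
      ∧ (∀ j ∈ J,
        betaF d ν (fun S => ∏ j ∈ J, (if 0 < phiS u S j then (1 : ℝ) else 0)) j.succ
          = (cConst d ν)⁻¹ *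
            (sigma1 d ν * alpha d ν J.card + sigma2 d ν * alpha d ν J.card
              + ((d : ℝ) - (J.card : ℝ)) * sigma3 d ν * alpha d ν (J.card + 1)
              + ((J.card : ℝ) - 1) * sigma3 d ν * alpha d ν J.card))
      ∧ (∀ j : Fin d, j ∉ J →
        betaF d ν (fun S => ∏ j ∈ J, (if 0 < phiS u S j then (1 : ℝ) else 0)) j.succ
          = (cConst d ν)⁻¹ *
            (sigma1 d ν * alpha d ν J.card + sigma2 d ν * alpha d ν (J.card + 1)
              + ((d : ℝ) - (J.card : ℝ) - 1) * sigma3 d ν * alpha d ν (J.card + 1)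
              + (J.card : ℝ) * sigma3 d ν * alpha d ν J.card)) :=
  betaF_indicator_product_general d hd ν u hu J
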